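/- Let X be a Gaussian random vector in ℝ^M with mean m ≠ 0 and covariance μΔ, with Δ symmetric positive semidefinite and μ > 0. Then for any threshold τ with 0 < τ < ‖m‖², P(‖X‖² < τ) ≤ C e^{-c/μ} for some constants C, c > 0 independent of μ. -/

import Mathlib

/-!
If `‖m + √μ A Z‖ < √τ < ‖m‖`, the triangle inequality forces `√μ ‖A‖ ‖Z‖ ≥ ‖m‖ - √τ > 0`, so some
coordinate of `Z` exceeds a constant multiple of `1 / √μ`. A union bound over the `M` coordinates
and the Chernoff tail `2 exp (-t² / 2)` of a standard Gaussian give `P ≤ C exp (-c / μ)`.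
-/

open MeasureTheory Matrix ProbabilityTheory

open Real NNReal

lemma hasSubgaussianMGF_id_gaussianReal (v : ℝ≥0) : HasSubgaussianMGF id v (gaussianReal 0 v) where
  integrable_exp_mul t := integrable_exp_mul_gaussianReal t
  mgf_le t := by simp [mgf_id_gaussianReal]

lemma sub_lt_norm_of_norm_add_lt {E : Type*} [SeminormedAddCommGroup E] {u v : E} {r : ℝ}
    (h : ‖u + v‖ < r) : ‖u‖ - r < ‖v‖ := by
  have := norm_le_add_norm_add u v
  linarith

section
variable {Ω : Type*} [MeasurableSpace Ω] {μ : Measure Ω} {c : ℝ≥0}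

lemma ProbabilityTheory.HasSubgaussianMGF.measure_abs_ge_le {X : Ω → ℝ}
    (h : HasSubgaussianMGF X c μ) {ε : ℝ} (hε : 0 ≤ ε) :
    μ.real {ω | ε ≤ |X ω|} ≤ 2 * exp (-ε ^ 2 / (2 * c)) := by
  have hsplit : {ω | ε ≤ |X ω|} = {ω | ε ≤ X ω} ∪ {ω | ε ≤ (-X) ω} := by
    ext ω
    simp only [Set.mem_ofPred_eq, Set.mem_union, Pi.neg_apply, le_abs]
  calc μ.real {ω | ε ≤ |X ω|}
      ≤ μ.real {ω | ε ≤ X ω} + μ.real {ω | ε ≤ (-X) ω} := hsplit ▸ measureReal_union_le _ _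
    _ ≤ 2 * exp (-ε ^ 2 / (2 * c)) := by
      linarith [h.measure_ge_le hε, h.neg.measure_ge_le hε]

variable [IsFiniteMeasure μ] {ι : Type*} [Fintype ι] {Z : Ω → ι → ℝ}

lemma measure_norm_ge_le_of_forall_hasSubgaussianMGF
    (hZ : ∀ i, HasSubgaussianMGF (fun ω ↦ Z ω i) c μ) {ε : ℝ} (hε : 0 < ε) :
    μ.real {ω | ε ≤ ‖Z ω‖} ≤ Fintype.card ι * (2 * exp (-ε ^ 2 / (2 * c))) := by
  have hcover : {ω | ε ≤ ‖Z ω‖} ⊆ ⋃ i, {ω | ε ≤ |Z ω i|} := by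
    intro ω hω
    by_contra hnot
    simp only [Set.mem_iUnion, Set.mem_ofPred_eq, not_exists, not_le] at hnot
    exact (not_le.2 ((pi_norm_lt_iff hε).2 hnot)) hω
  calc μ.real {ω | ε ≤ ‖Z ω‖}
      ≤ ∑ i, μ.real {ω | ε ≤ |Z ω i|} :=
        (measureReal_mono hcover).trans (measureReal_iUnion_fintype_le _)
    _ ≤ ∑ _i : ι, 2 * exp (-ε ^ 2 / (2 * c)) :=
        Finset.sum_le_sum fun i _ ↦ (hZ i).measure_abs_ge_le hε.le
    _ = Fintype.card ι * (2 * exp (-ε ^ 2 / (2 * c))) := by simp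

theorem exists_measure_norm_add_smul_lt_le {E : Type*} [SeminormedAddCommGroup E]
    [NormedSpace ℝ E] (L : (ι → ℝ) →L[ℝ] E) (hZ : ∀ i, HasSubgaussianMGF (fun ω ↦ Z ω i) c μ)
    (hc : 0 < c) {u : E} {r : ℝ} (hr : r < ‖u‖) :
    ∃ C > (0 : ℝ), ∃ a > (0 : ℝ), ∀ s > (0 : ℝ),
      μ.real {ω | ‖u + s • L (Z ω)‖ < r} ≤ C * exp (-a / s ^ 2) := by
  set δ := ‖u‖ - r
  have hδ : 0 < δ := sub_pos.2 hr
  set K := ‖L‖ + 1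
  have hK : 0 < K := by positivity
  refine ⟨2 * Fintype.card ι + 1, by positivity, δ ^ 2 / (2 * c * K ^ 2), by positivity,
    fun s hs ↦ ?_⟩
  have hsub : {ω | ‖u + s • L (Z ω)‖ < r} ⊆ {ω | δ / (s * K) ≤ ‖Z ω‖} := by
    intro ω hω
    have hlt := sub_lt_norm_of_norm_add_lt hω
    have hL : ‖s • L (Z ω)‖ ≤ s * K * ‖Z ω‖ := by
      rw [norm_smul, Real.norm_of_nonneg hs.le, mul_assoc]
      gcongr
      exact (L.le_opNorm _).trans (by gcongr; linarith)
    rw [Set.mem_ofPred_eq, div_le_iff₀' (by positivity)]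
    linarith
  have hexp : -(δ / (s * K)) ^ 2 / (2 * c) = -(δ ^ 2 / (2 * c * K ^ 2)) / s ^ 2 := by
    field_simp
  calc μ.real {ω | ‖u + s • L (Z ω)‖ < r}
      ≤ μ.real {ω | δ / (s * K) ≤ ‖Z ω‖} := measureReal_mono hsub
    _ ≤ Fintype.card ι * (2 * exp (-(δ / (s * K)) ^ 2 / (2 * c))) :=
        measure_norm_ge_le_of_forall_hasSubgaussianMGF hZ (by positivity)
    _ ≤ (2 * Fintype.card ι + 1) * exp (-(δ ^ 2 / (2 * c * K ^ 2)) / s ^ 2) := by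
        rw [hexp]
        nlinarith [exp_pos (-(δ ^ 2 / (2 * c * K ^ 2)) / s ^ 2)]

end

theorem stmt6_general {M : ℕ} {Ω : Type*} [MeasurableSpace Ω] (P : Measure Ω)
    [IsProbabilityMeasure P]
    (Z : Ω → (Fin M → ℝ))
    (hZmeas : ∀ j, Measurable fun ω => Z ω j)
    (hZlaw : ∀ j, Measure.map (fun ω => Z ω j) P = gaussianReal 0 1)
    (A : Matrix (Fin M) (Fin M) ℝ)
    (m : Fin M → ℝ)
    (τ : ℝ) (hτ0 : 0 < τ) (hτ : τ < ∑ j, m j ^ 2) :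
    ∃ C > (0 : ℝ), ∃ c > (0 : ℝ), ∀ μ : ℝ, 0 < μ →
      P {ω | ∑ j, (m j + Real.sqrt μ * A.mulVec (Z ω) j) ^ 2 < τ} ≤
        ENNReal.ofReal (C * Real.exp (-c / μ)) := by
  -- `EuclideanSpace` so that the sum of squares in the event is `‖·‖ ^ 2`
  let L : (Fin M → ℝ) →L[ℝ] EuclideanSpace ℝ (Fin M) :=
    (EuclideanSpace.equiv (Fin M) ℝ).symm.toContinuousLinearMap ∘L
      LinearMap.toContinuousLinearMap A.mulVecLin
  let u : EuclideanSpace ℝ (Fin M) := WithLp.toLp 2 m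
  have hZ : ∀ j, HasSubgaussianMGF (fun ω ↦ Z ω j) 1 P := fun j ↦
    (HasSubgaussianMGF.id_map_iff (hZmeas j).aemeasurable).1
      (hZlaw j ▸ hasSubgaussianMGF_id_gaussianReal 1)
  have hu : √τ < ‖u‖ := by
    rw [EuclideanSpace.norm_eq]
    simpa [u] using Real.sqrt_lt_sqrt hτ0.le hτ
  obtain ⟨C, hC, a, ha, hbound⟩ := exists_measure_norm_add_smul_lt_le L hZ one_pos hu
  refine ⟨C, hC, a, ha, fun μ hμ ↦ ?_⟩
  have hevent : {ω | ∑ j, (m j + √μ * A.mulVec (Z ω) j) ^ 2 < τ} =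
      {ω | ‖u + √μ • L (Z ω)‖ < √τ} := by
    ext ω
    rw [Set.mem_ofPred_eq, Set.mem_ofPred_eq, Real.lt_sqrt (norm_nonneg _),
      EuclideanSpace.norm_sq_eq]
    simp [u, L]
  rw [hevent, ← ofReal_measureReal]
  simpa [Real.sq_sqrt hμ.le] using ENNReal.ofReal_le_ofReal (hbound (√μ) (Real.sqrt_pos.2 hμ))

/-- Misdetection bound: if `X ~ N(m, μ Δ)` in `ℝ^M` with `m ≠ 0` (realized as
`X = m + √μ · A Z` with `Z` a standard Gaussian vector and `Δ = A Aᵀ`), then for any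
threshold `τ` with `0 < τ < ‖m‖²` there are constants `C, c > 0`, independent of `μ`,
such that `P(‖X‖² < τ) ≤ C e^{-c/μ}` for all `μ > 0`. -/
theorem stmt6 {M : ℕ} {Ω : Type*} [MeasurableSpace Ω] (P : Measure Ω)
    [IsProbabilityMeasure P]
    (Z : Ω → (Fin M → ℝ))
    (hZmeas : ∀ j, Measurable fun ω => Z ω j)
    (hZlaw : ∀ j, Measure.map (fun ω => Z ω j) P = gaussianReal 0 1)
    (hZindep : iIndepFun (fun j ω => Z ω j) P)
    (A Δ : Matrix (Fin M) (Fin M) ℝ) (hΔ : Δ = A * Aᵀ)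
    (m : Fin M → ℝ) (hm : m ≠ 0)
    (τ : ℝ) (hτ0 : 0 < τ) (hτ : τ < ∑ j, m j ^ 2) :
    ∃ C > (0 : ℝ), ∃ c > (0 : ℝ), ∀ μ : ℝ, 0 < μ →
      P {ω | ∑ j, (m j + Real.sqrt μ * A.mulVec (Z ω) j) ^ 2 < τ} ≤
        ENNReal.ofReal (C * Real.exp (-c / μ)) :=
  stmt6_general P Z hZmeas hZlaw A m τ hτ0 hτ
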